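/- arXiv:math-ph/0311053 — 4 statements merged into one kernel-verified Lean document; each statement's English description precedes it below -/
import Mathlib

section
/- If (w, c, α²) is a non-trivial solution of the Taylor–Goldstein eigenvalue problem with c_i > 0, then multiplying the equation by the complex conjugate w*, integrating over [z₁, z₂], and integrating by parts using the boundary conditions yields the complex integral identity ∫_{z₁}^{z₂} (|w′|² + α²|w|²) dz + ∫_{z₁}^{z₂} ( U″/(U − c) − gβ/(U − c)² ) |w|² dz = 0. -/
/-!
Multiplying the equation by `w*` turns `w*·w″` into `(U″/(U−c) − gβ/(U−c)²)|w|² + α²|w|²`, while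
`w*·w″ + |w′|²` is the derivative of `w*·w′`, which vanishes at both ends by the boundary conditions.
-/

open Set MeasureTheory ComplexConjugate Interval

theorem hasDerivAt_conj_mul {w w' : ℝ → ℂ} {x : ℝ} {a : ℂ} (hw : HasDerivAt w (w' x) x)
    (hw' : HasDerivAt w' a x) :
    HasDerivAt (fun y => conj (w y) * w' y) (((‖w' x‖ ^ 2 : ℝ) : ℂ) + conj (w x) * a) x := by
  refine (hw.star.mul hw').congr_deriv ?_
  push_cast
  rw [← Complex.conj_mul']
  simp only [Complex.star_def]

section DirichletGreen

variable {a b : ℝ} {w w' w'' : ℝ → ℂ}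

theorem intervalIntegrable_norm_sq_add_conj_mul (hw : ContinuousOn w [[a, b]])
    (hw' : ContinuousOn w' [[a, b]]) (hw'' : IntervalIntegrable w'' volume a b) :
    IntervalIntegrable (fun x => ((‖w' x‖ ^ 2 : ℝ) : ℂ) + conj (w x) * w'' x) volume a b :=
  (Complex.continuous_ofReal.comp_continuousOn (hw'.norm.pow 2)).intervalIntegrable.add
    (hw''.continuousOn_mul (Complex.continuous_conj.comp_continuousOn hw))

theorem integral_norm_sq_deriv_add_conj_mul_eq_zero
    (hw : ∀ x ∈ [[a, b]], HasDerivAt w (w' x) x) (hw' : ∀ x ∈ [[a, b]], HasDerivAt w' (w'' x) x)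
    (hw'' : IntervalIntegrable w'' volume a b) (ha : w a = 0) (hb : w b = 0) :
    ∫ x in a..b, ((‖w' x‖ ^ 2 : ℝ) : ℂ) + conj (w x) * w'' x = 0 := by
  have hint := intervalIntegrable_norm_sq_add_conj_mul
    (fun x hx => (hw x hx).continuousAt.continuousWithinAt)
    (fun x hx => (hw' x hx).continuousAt.continuousWithinAt) hw''
  rw [intervalIntegral.integral_eq_sub_of_hasDerivAt
    (fun x hx => hasDerivAt_conj_mul (hw x hx) (hw' x hx)) hint, ha, hb]
  simp

end DirichletGreen

theorem taylor_goldstein_complex_identity_general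
    (z₁ z₂ : ℝ) (hz : z₁ < z₂)
    (g : ℝ)
    (U U'' : ℝ → ℝ)
    (β : ℝ → ℝ)
    (α : ℝ)
    (c : ℂ)
    (w w' w'' : ℝ → ℂ)
    (hw : ∀ z ∈ Icc z₁ z₂, HasDerivAt w (w' z) z)
    (hw' : ∀ z ∈ Icc z₁ z₂, HasDerivAt w' (w'' z) z)
    (hw'' : ContinuousOn w'' (Icc z₁ z₂))
    (hbc₁ : w z₁ = 0) (hbc₂ : w z₂ = 0)
    (heq : ∀ z ∈ Icc z₁ z₂,
      w'' z - (α : ℂ) ^ 2 * w z - ((U'' z : ℂ) / ((U z : ℂ) - c)) * w z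
        + ((g : ℂ) * (β z : ℂ) / ((U z : ℂ) - c) ^ 2) * w z = 0) :
    (∫ z in z₁..z₂, ((‖w' z‖ ^ 2 + α ^ 2 * ‖w z‖ ^ 2 : ℝ) : ℂ))
      + ∫ z in z₁..z₂,
          ((U'' z : ℂ) / ((U z : ℂ) - c)
            - (g : ℂ) * (β z : ℂ) / ((U z : ℂ) - c) ^ 2) * ((‖w z‖ ^ 2 : ℝ) : ℂ)
      = 0 := by
  rw [← uIcc_of_le hz.le] at hw hw' hw'' heq
  have hwc : ContinuousOn w [[z₁, z₂]] := fun z hz => (hw z hz).continuousAt.continuousWithinAt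
  have hw'c : ContinuousOn w' [[z₁, z₂]] := fun z hz => (hw' z hz).continuousAt.continuousWithinAt
  have henergy : IntervalIntegrable (fun z => ((‖w' z‖ ^ 2 + α ^ 2 * ‖w z‖ ^ 2 : ℝ) : ℂ))
      volume z₁ z₂ :=
    (Complex.continuous_ofReal.comp_continuousOn
      ((hw'c.norm.pow 2).add (continuousOn_const.mul (hwc.norm.pow 2)))).intervalIntegrable
  have hcoeff : EqOn
      (fun z => ((U'' z : ℂ) / ((U z : ℂ) - c)
        - (g : ℂ) * (β z : ℂ) / ((U z : ℂ) - c) ^ 2) * ((‖w z‖ ^ 2 : ℝ) : ℂ))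
      (fun z => (((‖w' z‖ ^ 2 : ℝ) : ℂ) + conj (w z) * w'' z)
        - ((‖w' z‖ ^ 2 + α ^ 2 * ‖w z‖ ^ 2 : ℝ) : ℂ)) [[z₁, z₂]] := by
    intro z hz
    push_cast
    rw [← Complex.conj_mul']
    linear_combination (-conj (w z)) * heq z hz
  rw [intervalIntegral.integral_congr hcoeff, intervalIntegral.integral_sub
    (intervalIntegrable_norm_sq_add_conj_mul hwc hw'c hw''.intervalIntegrable) henergy,
    integral_norm_sq_deriv_add_conj_mul_eq_zero hw hw' hw''.intervalIntegrable hbc₁ hbc₂]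
  ring

/-- Lemma 3.1 step (3.4): multiplying the Taylor–Goldstein equation by `w*`,
integrating over `[z₁, z₂]` and integrating by parts yields
`∫ (|w′|² + α²|w|²) + ∫ (U″/(U−c) − gβ/(U−c)²)|w|² = 0`. -/
theorem taylor_goldstein_complex_identity
    (z₁ z₂ : ℝ) (hz : z₁ < z₂)
    (g : ℝ) (hg : 0 < g)
    (U U' U'' : ℝ → ℝ)
    (hU : ∀ z ∈ Icc z₁ z₂, HasDerivAt U (U' z) z)
    (hU' : ∀ z ∈ Icc z₁ z₂, HasDerivAt U' (U'' z) z)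
    (hU'' : ContinuousOn U'' (Icc z₁ z₂))
    (β : ℝ → ℝ) (hβc : ContinuousOn β (Icc z₁ z₂))
    (hβ : ∀ z ∈ Icc z₁ z₂, 0 ≤ β z)
    (α : ℝ) (hα : 0 < α)
    (c : ℂ) (hci : 0 < c.im)
    (w w' w'' : ℝ → ℂ)
    (hw : ∀ z ∈ Icc z₁ z₂, HasDerivAt w (w' z) z)
    (hw' : ∀ z ∈ Icc z₁ z₂, HasDerivAt w' (w'' z) z)
    (hw'' : ContinuousOn w'' (Icc z₁ z₂))
    (hw0 : ∃ z ∈ Icc z₁ z₂, w z ≠ 0)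
    (hbc₁ : w z₁ = 0) (hbc₂ : w z₂ = 0)
    (heq : ∀ z ∈ Icc z₁ z₂,
      w'' z - (α : ℂ) ^ 2 * w z - ((U'' z : ℂ) / ((U z : ℂ) - c)) * w z
        + ((g : ℂ) * (β z : ℂ) / ((U z : ℂ) - c) ^ 2) * w z = 0) :
    (∫ z in z₁..z₂, ((‖w' z‖ ^ 2 + α ^ 2 * ‖w z‖ ^ 2 : ℝ) : ℂ))
      + ∫ z in z₁..z₂,
          ((U'' z : ℂ) / ((U z : ℂ) - c)
            - (g : ℂ) * (β z : ℂ) / ((U z : ℂ) - c) ^ 2) * ((‖w z‖ ^ 2 : ℝ) : ℂ)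
      = 0 :=
  taylor_goldstein_complex_identity_general z₁ z₂ hz g U U'' β α c w w' w'' hw hw' hw'' hbc₁ hbc₂
    heq
end

section
/- If (w, c, α²) is a non-trivial solution of the Taylor–Goldstein eigenvalue problem with c_i > 0, then the real-part integral relation ∫_{z₁}^{z₂} (|w′|² + α²|w|²) dz + ∫_{z₁}^{z₂} U″(U − c_r)/((U − c_r)² + c_i²) |w|² dz − ∫_{z₁}^{z₂} gβ((U − c_r)² − c_i²)/((U − c_r)² + c_i²)² |w|² dz = 0 holds (Lemma 3.1, relation (3.1)). -/
/-!
Multiplying the Taylor–Goldstein equation by `conj w` and integrating, the term `w'' * conj w`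
integrates by parts to `-∫ ‖w'‖²` because `w` vanishes at both ends. This leaves
`∫ (‖w'‖² + K ‖w‖²) = 0` for the complex coefficient `K = α² + U''/(U - c) - gβ/(U - c)²`,
and the relation is its real part. Since `c.im ≠ 0`, the denominators `|U - c|²` never vanish,
so each of the three integrands is continuous and the integral splits.
-/

open Set MeasureTheory intervalIntegral ComplexConjugate

namespace Complex

theorem re_ofReal_div (r : ℝ) (x : ℂ) : ((r : ℂ) / x).re = r * x.re / normSq x := by
  simp [div_re]

theorem re_ofReal_div_sq (r : ℝ) (x : ℂ) :
    ((r : ℂ) / x ^ 2).re = r * (x.re ^ 2 - x.im ^ 2) / normSq x ^ 2 := by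
  rw [re_ofReal_div, map_pow]
  simp [sq, mul_re]

theorem normSq_ofReal_sub (r : ℝ) (c : ℂ) :
    normSq ((r : ℂ) - c) = (r - c.re) ^ 2 + c.im ^ 2 := by
  simp [normSq_apply]
  ring

theorem re_taylorGoldstein_coeff (α g b u u'' : ℝ) (c : ℂ) :
    ((α : ℂ) ^ 2 + (u'' : ℂ) / ((u : ℂ) - c) - (g : ℂ) * (b : ℂ) / ((u : ℂ) - c) ^ 2).re
      = α ^ 2 + u'' * (u - c.re) / ((u - c.re) ^ 2 + c.im ^ 2)
        - g * b * ((u - c.re) ^ 2 - c.im ^ 2) / ((u - c.re) ^ 2 + c.im ^ 2) ^ 2 := by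
  rw [sub_re, add_re, ← ofReal_mul, re_ofReal_div, re_ofReal_div_sq, normSq_ofReal_sub]
  simp [← ofReal_pow]

end Complex

section Dirichlet

variable {a b : ℝ} {w w' w'' : ℝ → ℂ}

theorem intervalIntegrable_mul_conj_add_mul_conj
    (hw : ∀ x ∈ uIcc a b, HasDerivAt w (w' x) x)
    (hw' : ∀ x ∈ uIcc a b, HasDerivAt w' (w'' x) x)
    (hw'' : ContinuousOn w'' (uIcc a b)) :
    IntervalIntegrable (fun x => w'' x * conj (w x) + w' x * conj (w' x)) volume a b :=
  ((hw''.mul (Complex.continuous_conj.comp_continuousOn (HasDerivAt.continuousOn hw))).add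
    ((HasDerivAt.continuousOn hw').mul
      (Complex.continuous_conj.comp_continuousOn (HasDerivAt.continuousOn hw')))).intervalIntegrable

theorem integral_mul_conj_add_mul_conj_eq_zero
    (hw : ∀ x ∈ uIcc a b, HasDerivAt w (w' x) x)
    (hw' : ∀ x ∈ uIcc a b, HasDerivAt w' (w'' x) x)
    (hw'' : ContinuousOn w'' (uIcc a b)) (ha : w a = 0) (hb : w b = 0) :
    ∫ x in a..b, (w'' x * conj (w x) + w' x * conj (w' x)) = 0 := by
  have hint := intervalIntegrable_mul_conj_add_mul_conj hw hw' hw''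
  have hderiv : ∀ x ∈ uIcc a b, HasDerivAt (fun x => w' x * conj (w x))
      (w'' x * conj (w x) + w' x * conj (w' x)) x :=
    fun x hx => (hw' x hx).mul (hw x hx).star
  rw [integral_eq_sub_of_hasDerivAt hderiv hint]
  simp [ha, hb]

theorem integral_norm_deriv_sq_add_re_mul_norm_sq_eq_zero {K : ℝ → ℂ}
    (hw : ∀ x ∈ uIcc a b, HasDerivAt w (w' x) x)
    (hw' : ∀ x ∈ uIcc a b, HasDerivAt w' (w'' x) x)
    (hw'' : ContinuousOn w'' (uIcc a b)) (ha : w a = 0) (hb : w b = 0)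
    (hK : ∀ x ∈ uIcc a b, w'' x = K x * w x) :
    ∫ x in a..b, (‖w' x‖ ^ 2 + (K x).re * ‖w x‖ ^ 2) = 0 := by
  have hint := intervalIntegrable_mul_conj_add_mul_conj hw hw' hw''
  have hpoint : EqOn (fun x => ‖w' x‖ ^ 2 + (K x).re * ‖w x‖ ^ 2)
      (fun x => (w'' x * conj (w x) + w' x * conj (w' x)).re) (uIcc a b) := by
    intro x hx
    simp only [hK x hx, mul_assoc, Complex.mul_conj', Complex.add_re, ← Complex.ofReal_pow,
      Complex.re_mul_ofReal, Complex.ofReal_re]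
    ring
  have hre := Complex.reCLM.intervalIntegral_comp_comm hint
  rw [integral_mul_conj_add_mul_conj_eq_zero hw hw' hw'' ha hb] at hre
  simpa only [integral_congr hpoint, Complex.reCLM_apply, map_zero] using hre

end Dirichlet

theorem taylor_goldstein_real_part_relation_general
    (z₁ z₂ : ℝ) (hz : z₁ < z₂)
    (g : ℝ)
    (U U' U'' : ℝ → ℝ)
    (hU : ∀ z ∈ Icc z₁ z₂, HasDerivAt U (U' z) z)
    (hU'' : ContinuousOn U'' (Icc z₁ z₂))
    (β : ℝ → ℝ) (hβc : ContinuousOn β (Icc z₁ z₂))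
    (α : ℝ)
    (c : ℂ) (hci : 0 < c.im)
    (w w' w'' : ℝ → ℂ)
    (hw : ∀ z ∈ Icc z₁ z₂, HasDerivAt w (w' z) z)
    (hw' : ∀ z ∈ Icc z₁ z₂, HasDerivAt w' (w'' z) z)
    (hw'' : ContinuousOn w'' (Icc z₁ z₂))
    (hbc₁ : w z₁ = 0) (hbc₂ : w z₂ = 0)
    (heq : ∀ z ∈ Icc z₁ z₂,
      w'' z - (α : ℂ) ^ 2 * w z - ((U'' z : ℂ) / ((U z : ℂ) - c)) * w z
        + ((g : ℂ) * (β z : ℂ) / ((U z : ℂ) - c) ^ 2) * w z = 0) :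
    (∫ z in z₁..z₂, (‖w' z‖ ^ 2 + α ^ 2 * ‖w z‖ ^ 2))
      + (∫ z in z₁..z₂,
          U'' z * (U z - c.re) / ((U z - c.re) ^ 2 + c.im ^ 2) * ‖w z‖ ^ 2)
      - (∫ z in z₁..z₂,
          g * β z * ((U z - c.re) ^ 2 - c.im ^ 2)
            / ((U z - c.re) ^ 2 + c.im ^ 2) ^ 2 * ‖w z‖ ^ 2)
      = 0 := by
  rw [← uIcc_of_le hz.le] at hU hU'' hβc hw hw' hw'' heq
  have energy := integral_norm_deriv_sq_add_re_mul_norm_sq_eq_zero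
    (K := fun z => (α : ℂ) ^ 2 + (U'' z : ℂ) / ((U z : ℂ) - c)
      - (g : ℂ) * (β z : ℂ) / ((U z : ℂ) - c) ^ 2)
    hw hw' hw'' hbc₁ hbc₂ (fun z hz => by linear_combination heq z hz)
  simp only [Complex.re_taylorGoldstein_coeff] at energy
  have hden : ∀ z ∈ uIcc z₁ z₂, (U z - c.re) ^ 2 + c.im ^ 2 ≠ 0 := fun z _ => by positivity
  have hUc := HasDerivAt.continuousOn hU
  have hwc := HasDerivAt.continuousOn hw
  have hw'c := HasDerivAt.continuousOn hw'
  have hP : IntervalIntegrable (fun z => ‖w' z‖ ^ 2 + α ^ 2 * ‖w z‖ ^ 2) volume z₁ z₂ :=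
    ContinuousOn.intervalIntegrable (by fun_prop)
  have hQ : IntervalIntegrable (fun z =>
      U'' z * (U z - c.re) / ((U z - c.re) ^ 2 + c.im ^ 2) * ‖w z‖ ^ 2) volume z₁ z₂ :=
    ContinuousOn.intervalIntegrable ((ContinuousOn.div (by fun_prop) (by fun_prop) hden).mul
      (by fun_prop))
  have hR : IntervalIntegrable (fun z => g * β z * ((U z - c.re) ^ 2 - c.im ^ 2)
      / ((U z - c.re) ^ 2 + c.im ^ 2) ^ 2 * ‖w z‖ ^ 2) volume z₁ z₂ :=
    ContinuousOn.intervalIntegrable ((ContinuousOn.div (by fun_prop) (by fun_prop)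
      fun z hz => pow_ne_zero 2 (hden z hz)).mul (by fun_prop))
  rw [← intervalIntegral.integral_add hP hQ, ← intervalIntegral.integral_sub (hP.add hQ) hR, ← energy]
  exact integral_congr fun z _ => by ring

/-- Lemma 3.1, relation (3.1): the real part of the first integral identity for the
Taylor–Goldstein eigenvalue problem. -/
theorem taylor_goldstein_real_part_relation
    (z₁ z₂ : ℝ) (hz : z₁ < z₂)
    (g : ℝ) (hg : 0 < g)
    (U U' U'' : ℝ → ℝ)
    (hU : ∀ z ∈ Icc z₁ z₂, HasDerivAt U (U' z) z)
    (hU' : ∀ z ∈ Icc z₁ z₂, HasDerivAt U' (U'' z) z)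
    (hU'' : ContinuousOn U'' (Icc z₁ z₂))
    (β : ℝ → ℝ) (hβc : ContinuousOn β (Icc z₁ z₂))
    (hβ : ∀ z ∈ Icc z₁ z₂, 0 ≤ β z)
    (α : ℝ) (hα : 0 < α)
    (c : ℂ) (hci : 0 < c.im)
    (w w' w'' : ℝ → ℂ)
    (hw : ∀ z ∈ Icc z₁ z₂, HasDerivAt w (w' z) z)
    (hw' : ∀ z ∈ Icc z₁ z₂, HasDerivAt w' (w'' z) z)
    (hw'' : ContinuousOn w'' (Icc z₁ z₂))
    (hw0 : ∃ z ∈ Icc z₁ z₂, w z ≠ 0)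
    (hbc₁ : w z₁ = 0) (hbc₂ : w z₂ = 0)
    (heq : ∀ z ∈ Icc z₁ z₂,
      w'' z - (α : ℂ) ^ 2 * w z - ((U'' z : ℂ) / ((U z : ℂ) - c)) * w z
        + ((g : ℂ) * (β z : ℂ) / ((U z : ℂ) - c) ^ 2) * w z = 0) :
    (∫ z in z₁..z₂, (‖w' z‖ ^ 2 + α ^ 2 * ‖w z‖ ^ 2))
      + (∫ z in z₁..z₂,
          U'' z * (U z - c.re) / ((U z - c.re) ^ 2 + c.im ^ 2) * ‖w z‖ ^ 2)
      - (∫ z in z₁..z₂,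
          g * β z * ((U z - c.re) ^ 2 - c.im ^ 2)
            / ((U z - c.re) ^ 2 + c.im ^ 2) ^ 2 * ‖w z‖ ^ 2)
      = 0 :=
  taylor_goldstein_real_part_relation_general z₁ z₂ hz g U U' U'' hU hU'' β hβc α c hci w w' w'' hw
    hw' hw'' hbc₁ hbc₂ heq
end

section
/- Suppose w is twice continuously differentiable on [z₁, z₂], not identically zero, satisfies w(z₁) = w(z₂) = 0, c_i > 0, and the (buoyancy-truncated) integral relation ∫_{z₁}^{z₂} (|w″|² + 2α²|w′|² + α⁴|w|²) dz − ∫_{z₁}^{z₂} (U″)²/((U − c_r)² + c_i²) |w|² dz + 2 ∫_{z₁}^{z₂} gβ U″ (U − c_r)/((U − c_r)² + c_i²)² |w|² dz = 0 holds, which is relation (3.8) of the paper with the second-order term g²β² neglected. Then the growth-rate inequality α³ c_i³ ≤ M² c_i / α + N / α holds, where M² is the maximum of (U″)² over [z₁, z₂] and N is the maximum of gβ|U″| over [z₁, z₂] (inequality (3.22); the main theorem). -/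
open Set MeasureTheory

/-! Since `Im c > 0`, the denominator `(U - c_r)² + c_i²` is at least `c_i²`. The shear term is
then at most `M²/c_i²` times `∫ |w|²` and, as `2|t|c_i ≤ t² + c_i²`, the buoyancy term at most
`N/c_i³` times it, while the energy integral is at least `α⁴ ∫ |w|²`. Dividing the relation by
`∫ |w|² > 0` gives `α⁴ ≤ M²/c_i² + N/c_i³`. -/

/-- A non-integrable `f` has integral `0`, which is `≤ ∫ g` as `g ≥ 0`. -/
theorem intervalIntegral.integral_mono_on_of_nonneg_right {f g : ℝ → ℝ} {a b : ℝ} (hab : a ≤ b)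
    (hg : IntervalIntegrable g volume a b) (hg₀ : ∀ x ∈ Icc a b, 0 ≤ g x)
    (hfg : ∀ x ∈ Icc a b, f x ≤ g x) :
    ∫ x in a..b, f x ≤ ∫ x in a..b, g x := by
  by_cases hf : IntervalIntegrable f volume a b
  · exact intervalIntegral.integral_mono_on hab hf hg hfg
  · rw [intervalIntegral.integral_undef hf]
    exact intervalIntegral.integral_nonneg hab hg₀

theorem intervalIntegral.integral_norm_sq_pos {E : Type*} [NormedAddCommGroup E] {w : ℝ → E}
    {a b : ℝ} (hab : a < b) (hw : ContinuousOn w (Icc a b)) (hne : ∃ z ∈ Icc a b, w z ≠ 0) :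
    0 < ∫ z in a..b, ‖w z‖ ^ 2 := by
  obtain ⟨z, hz, hwz⟩ := hne
  exact intervalIntegral.integral_pos hab (hw.norm.pow 2) (fun x _ => by positivity)
    ⟨z, hz, by positivity⟩

theorem pow_four_mul_integral_norm_sq_le {E : Type*} [NormedAddCommGroup E] {w w' w'' : ℝ → E}
    {a b : ℝ} (hab : a ≤ b) (hw : ContinuousOn w (Icc a b)) (hw' : ContinuousOn w' (Icc a b))
    (hw'' : ContinuousOn w'' (Icc a b)) (α : ℝ) :
    α ^ 4 * ∫ z in a..b, ‖w z‖ ^ 2 ≤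
      ∫ z in a..b, (‖w'' z‖ ^ 2 + 2 * α ^ 2 * ‖w' z‖ ^ 2 + α ^ 4 * ‖w z‖ ^ 2) := by
  rw [← intervalIntegral.integral_const_mul]
  refine intervalIntegral.integral_mono_on hab
    ((continuousOn_const.mul (hw.norm.pow 2)).intervalIntegrable_of_Icc hab)
    (((hw''.norm.pow 2).add (continuousOn_const.mul (hw'.norm.pow 2))).add
      (continuousOn_const.mul (hw.norm.pow 2)) |>.intervalIntegrable_of_Icc hab)
    fun z _ => ?_
  have : 0 ≤ α ^ 2 * ‖w' z‖ ^ 2 := by positivity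
  nlinarith [sq_nonneg ‖w'' z‖]

theorem div_sq_add_sq_le_div_sq {a m c : ℝ} (t : ℝ) (hc : 0 < c) (ha : 0 ≤ a) (ham : a ≤ m) :
    a / (t ^ 2 + c ^ 2) ≤ m / c ^ 2 :=
  calc a / (t ^ 2 + c ^ 2) ≤ a / c ^ 2 :=
        div_le_div_of_nonneg_left ha (by positivity) (le_add_of_nonneg_left (sq_nonneg t))
    _ ≤ m / c ^ 2 := div_le_div_of_nonneg_right ham (by positivity)

theorem two_mul_abs_div_sq_add_sq_sq_le (t : ℝ) {c : ℝ} (hc : 0 < c) :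
    2 * |t| / (t ^ 2 + c ^ 2) ^ 2 ≤ 1 / c ^ 3 := by
  rw [div_le_div_iff₀ (by positivity) (by positivity)]
  have hAMGM : 2 * |t| * c ≤ t ^ 2 + c ^ 2 := by nlinarith [sq_nonneg (|t| - c), sq_abs t]
  have hc2 : c ^ 2 ≤ t ^ 2 + c ^ 2 := le_add_of_nonneg_left (sq_nonneg t)
  calc 2 * |t| * c ^ 3 = (2 * |t| * c) * c ^ 2 := by ring
    _ ≤ (t ^ 2 + c ^ 2) * (t ^ 2 + c ^ 2) := by gcongr
    _ = 1 * (t ^ 2 + c ^ 2) ^ 2 := by ring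

theorem neg_two_mul_div_sq_add_sq_sq_le {b N c : ℝ} (t : ℝ) (hc : 0 < c) (hb : |b| ≤ N) :
    -2 * (b * t / (t ^ 2 + c ^ 2) ^ 2) ≤ N / c ^ 3 := by
  have hbt : -(b * t) ≤ |b| * |t| := (neg_le_abs _).trans (abs_mul b t).le
  calc -2 * (b * t / (t ^ 2 + c ^ 2) ^ 2) = 2 * -(b * t) / (t ^ 2 + c ^ 2) ^ 2 := by ring
    _ ≤ 2 * (|b| * |t|) / (t ^ 2 + c ^ 2) ^ 2 := by gcongr
    _ = |b| * (2 * |t| / (t ^ 2 + c ^ 2) ^ 2) := by ring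
    _ ≤ N * (1 / c ^ 3) :=
        mul_le_mul hb (two_mul_abs_div_sq_add_sq_sq_le t hc) (by positivity) ((abs_nonneg b).trans hb)
    _ = N / c ^ 3 := by ring

theorem pow_three_mul_pow_three_le_of_pow_four_le {α c M N : ℝ} (hα : 0 < α) (hc : 0 < c)
    (h : α ^ 4 ≤ M / c ^ 2 + N / c ^ 3) :
    α ^ 3 * c ^ 3 ≤ M * c / α + N / α := by
  have hsum : M / c ^ 2 + N / c ^ 3 = (M * c + N) / c ^ 3 := by field_simp
  rw [hsum, le_div_iff₀ (by positivity)] at h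
  rw [← add_div, le_div_iff₀ hα]
  linarith

theorem taylor_goldstein_growth_rate_bound_general
    (z₁ z₂ : ℝ) (hz : z₁ < z₂)
    (g : ℝ) (hg : 0 < g)
    (U U'' : ℝ → ℝ)
    (β : ℝ → ℝ)
    (hβ : ∀ z ∈ Icc z₁ z₂, 0 ≤ β z)
    (α : ℝ) (hα : 0 < α)
    (c : ℂ) (hci : 0 < c.im)
    (w w' w'' : ℝ → ℂ)
    (hw : ∀ z ∈ Icc z₁ z₂, HasDerivAt w (w' z) z)
    (hw' : ∀ z ∈ Icc z₁ z₂, HasDerivAt w' (w'' z) z)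
    (hw'' : ContinuousOn w'' (Icc z₁ z₂))
    (hw0 : ∃ z ∈ Icc z₁ z₂, w z ≠ 0)
    (M2 : ℝ)
    (hM2 : IsGreatest ((fun z => (U'' z) ^ 2) '' Icc z₁ z₂) M2)
    (hrel : (∫ z in z₁..z₂,
        (‖w'' z‖ ^ 2 + 2 * α ^ 2 * ‖w' z‖ ^ 2 + α ^ 4 * ‖w z‖ ^ 2))
      - (∫ z in z₁..z₂,
          (U'' z) ^ 2 / ((U z - c.re) ^ 2 + c.im ^ 2) * ‖w z‖ ^ 2)
      + 2 * (∫ z in z₁..z₂,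
          g * β z * U'' z * (U z - c.re)
            / ((U z - c.re) ^ 2 + c.im ^ 2) ^ 2 * ‖w z‖ ^ 2)
      = 0)
    (N : ℝ)
    (hN : IsGreatest ((fun z => g * β z * |U'' z|) '' Icc z₁ z₂) N) :
    α ^ 3 * c.im ^ 3 ≤ M2 * c.im / α + N / α := by
  have hwc : ContinuousOn w (Icc z₁ z₂) :=
    continuousOn_of_forall_continuousAt fun z hz => (hw z hz).continuousAt
  have hw'c : ContinuousOn w' (Icc z₁ z₂) :=
    continuousOn_of_forall_continuousAt fun z hz => (hw' z hz).continuousAt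
  have hwi : IntervalIntegrable (fun z => ‖w z‖ ^ 2) volume z₁ z₂ :=
    (hwc.norm.pow 2).intervalIntegrable_of_Icc hz.le
  have hS := intervalIntegral.integral_norm_sq_pos hz hwc hw0
  have hM2₀ : 0 ≤ M2 := by
    obtain ⟨z, -, rfl⟩ := hM2.1
    positivity
  have hN₀ : 0 ≤ N := by
    obtain ⟨z, hz, rfl⟩ := hN.1
    exact mul_nonneg (mul_nonneg hg.le (hβ z hz)) (abs_nonneg _)
  have hshear := intervalIntegral.integral_mono_on_of_nonneg_right hz.le
    (hwi.const_mul (M2 / c.im ^ 2)) (fun z _ => by positivity) fun z hz =>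
      mul_le_mul_of_nonneg_right
        (div_sq_add_sq_le_div_sq (U z - c.re) hci (sq_nonneg _) (hM2.2 ⟨z, hz, rfl⟩)) (by positivity)
  have hbuoy : ∫ z in z₁..z₂, -2 * (g * β z * U'' z * (U z - c.re)
        / ((U z - c.re) ^ 2 + c.im ^ 2) ^ 2 * ‖w z‖ ^ 2)
      ≤ ∫ z in z₁..z₂, N / c.im ^ 3 * ‖w z‖ ^ 2 :=
    intervalIntegral.integral_mono_on_of_nonneg_right hz.le
    (hwi.const_mul (N / c.im ^ 3)) (fun z _ => by positivity) fun z hz => by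
      rw [← mul_assoc]
      refine mul_le_mul_of_nonneg_right (neg_two_mul_div_sq_add_sq_sq_le (U z - c.re) hci ?_) (by positivity)
      rw [abs_mul, abs_of_nonneg (mul_nonneg hg.le (hβ z hz))]
      exact hN.2 ⟨z, hz, rfl⟩
  have henergy := pow_four_mul_integral_norm_sq_le hz.le hwc hw'c hw'' α
  simp only [intervalIntegral.integral_const_mul] at hshear hbuoy
  refine pow_three_mul_pow_three_le_of_pow_four_le hα hci (le_of_mul_le_mul_right ?_ hS)
  linarith

/-- Inequality (3.22), the main theorem: the growth-rate bound
`α³c_i³ ≤ M²c_i/α + N/α`. -/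
theorem taylor_goldstein_growth_rate_bound
    (z₁ z₂ : ℝ) (hz : z₁ < z₂)
    (g : ℝ) (hg : 0 < g)
    (U U' U'' : ℝ → ℝ)
    (hU : ∀ z ∈ Icc z₁ z₂, HasDerivAt U (U' z) z)
    (hU' : ∀ z ∈ Icc z₁ z₂, HasDerivAt U' (U'' z) z)
    (hU'' : ContinuousOn U'' (Icc z₁ z₂))
    (β : ℝ → ℝ) (hβc : ContinuousOn β (Icc z₁ z₂))
    (hβ : ∀ z ∈ Icc z₁ z₂, 0 ≤ β z)
    (α : ℝ) (hα : 0 < α)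
    (c : ℂ) (hci : 0 < c.im)
    (w w' w'' : ℝ → ℂ)
    (hw : ∀ z ∈ Icc z₁ z₂, HasDerivAt w (w' z) z)
    (hw' : ∀ z ∈ Icc z₁ z₂, HasDerivAt w' (w'' z) z)
    (hw'' : ContinuousOn w'' (Icc z₁ z₂))
    (hw0 : ∃ z ∈ Icc z₁ z₂, w z ≠ 0)
    (hbc₁ : w z₁ = 0) (hbc₂ : w z₂ = 0)
    (M2 : ℝ)
    (hM2 : IsGreatest ((fun z => (U'' z) ^ 2) '' Icc z₁ z₂) M2)
    (hrel : (∫ z in z₁..z₂,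
        (‖w'' z‖ ^ 2 + 2 * α ^ 2 * ‖w' z‖ ^ 2 + α ^ 4 * ‖w z‖ ^ 2))
      - (∫ z in z₁..z₂,
          (U'' z) ^ 2 / ((U z - c.re) ^ 2 + c.im ^ 2) * ‖w z‖ ^ 2)
      + 2 * (∫ z in z₁..z₂,
          g * β z * U'' z * (U z - c.re)
            / ((U z - c.re) ^ 2 + c.im ^ 2) ^ 2 * ‖w z‖ ^ 2)
      = 0)
    (N : ℝ)
    (hN : IsGreatest ((fun z => g * β z * |U'' z|) '' Icc z₁ z₂) N) :
    α ^ 3 * c.im ^ 3 ≤ M2 * c.im / α + N / α :=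
  taylor_goldstein_growth_rate_bound_general z₁ z₂ hz g hg U U'' β hβ α hα c hci w w' w'' hw hw'
    hw'' hw0 M2 hM2 hrel N hN
end

section
/- (Homogeneous special case β = 0, recovering the result of Banerjee et al.) If (w, c, α²) is a non-trivial solution of the Rayleigh eigenvalue problem w″ − α²w − (U″/(U − c))w = 0 on [z₁, z₂] with w(z₁) = w(z₂) = 0 and c_i > 0, then α⁴ c_i² ≤ M², where M² is the maximum of (U″)² over [z₁, z₂]; in particular α c_i ≤ M/α, so the growth rate α c_i of an unstable mode tends to 0 as α → ∞. -/
open Set Filter Topology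

/-! At an interior maximum `z₀` of `|w|²` the second derivative `2|w'|² + 2 Re(w̄ w'')` is
nonpositive, so `Re(w̄ w'') ≤ 0`. The Rayleigh equation gives `w'' = (α² + U''/(U - c)) w`,
hence `α² ≤ -Re(U''/(U - c)) ≤ |U''|/|U - c| ≤ |U''|/c_i` at `z₀`, i.e. `α² c_i ≤ |U''(z₀)| ≤ M`. -/

theorem IsLocalMax.second_deriv_nonpos {f f' : ℝ → ℝ} {a f'' : ℝ} (h : IsLocalMax f a)
    (hf : ∀ᶠ x in 𝓝 a, HasDerivAt f (f' x) x) (hf' : HasDerivAt f' f'' a) : f'' ≤ 0 := by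
  -- Otherwise `f'` vanishes at `a` and is positive just right of it, so `f` increases there.
  by_contra! hpos
  have hf'a : f' a = 0 := h.hasDerivAt_eq_zero hf.self_of_nhds
  have hslope : ∀ᶠ x in 𝓝 a, x ≠ a → 0 < slope f' a x :=
    eventually_nhdsWithin_iff.1 <|
      (hasDerivAt_iff_tendsto_slope.1 hf').eventually (eventually_gt_nhds hpos)
  obtain ⟨l, u, ⟨hla, hau⟩, hsub⟩ := mem_nhds_iff_exists_Ioo_subset.1 (hf.and (h.and hslope))
  obtain ⟨y, hay, hyu⟩ := exists_between hau
  have hIcc : Icc a y ⊆ Ioo l u := Icc_subset_Ioo hla hyu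
  obtain ⟨ξ, hξ, hξeq⟩ := exists_hasDerivAt_eq_slope f f' hay
    (fun x hx => (hsub (hIcc hx)).1.continuousAt.continuousWithinAt)
    (fun x hx => (hsub (hIcc (Ioo_subset_Icc_self hx))).1)
  have hξpos : 0 < f' ξ :=
    pos_of_slope_pos hξ.1 ((hsub (hIcc (Ioo_subset_Icc_self hξ))).2.2 hξ.1.ne') hf'a
  have hincr : f a < f y := by
    rw [hξeq, div_pos_iff_of_pos_right (sub_pos.2 hay)] at hξpos
    linarith
  exact (hsub (hIcc (right_mem_Icc.2 hay.le))).2.1.not_gt hincr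

theorem IsLocalMax.real_inner_second_deriv_nonpos {E : Type*} [NormedAddCommGroup E]
    [InnerProductSpace ℝ E] {w w' : ℝ → E} {a : ℝ} {w'' : E} (h : IsLocalMax (‖w ·‖) a)
    (hw : ∀ᶠ t in 𝓝 a, HasDerivAt w (w' t) t) (hw' : HasDerivAt w' w'' a) :
    inner ℝ (w a) w'' ≤ 0 := by
  have hsq : IsLocalMax (‖w ·‖ ^ 2) a := by
    filter_upwards [h] with t ht using pow_le_pow_left₀ (norm_nonneg _) ht 2
  have hsq' := hsq.second_deriv_nonpos (hw.mono fun t ht => ht.norm_sq)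
    ((hw.self_of_nhds.inner ℝ hw').const_mul 2)
  linarith [real_inner_self_nonneg (x := w' a)]

theorem exists_mem_Ioo_isLocalMax_norm {E : Type*} [NormedAddCommGroup E] {w : ℝ → E}
    {a b : ℝ} (hw : ContinuousOn w (Icc a b)) (ha : w a = 0) (hb : w b = 0)
    (hne : ∃ z ∈ Icc a b, w z ≠ 0) : ∃ z ∈ Ioo a b, w z ≠ 0 ∧ IsLocalMax (‖w ·‖) z := by
  obtain ⟨z, hz, hwz⟩ := hne
  obtain ⟨z₀, hz₀, hmax⟩ := isCompact_Icc.exists_isMaxOn ⟨z, hz⟩ hw.norm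
  have hwz₀ : w z₀ ≠ 0 :=
    norm_pos_iff.1 ((norm_pos_iff.2 hwz).trans_le (hmax hz))
  have hz₀a : z₀ ≠ a := by rintro rfl; exact hwz₀ ha
  have hz₀b : z₀ ≠ b := by rintro rfl; exact hwz₀ hb
  have hz₀' : z₀ ∈ Ioo a b := ⟨hz₀.1.lt_of_ne' hz₀a, hz₀.2.lt_of_ne hz₀b⟩
  exact ⟨z₀, hz₀', hwz₀, hmax.isLocalMax (Icc_mem_nhds hz₀'.1 hz₀'.2)⟩

theorem exists_re_nonpos_of_hasDerivAt_eq_mul {a b : ℝ} {w w' w'' k : ℝ → ℂ}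
    (hw : ∀ z ∈ Icc a b, HasDerivAt w (w' z) z) (hw' : ∀ z ∈ Icc a b, HasDerivAt w' (w'' z) z)
    (heq : ∀ z ∈ Icc a b, w'' z = k z * w z) (ha : w a = 0) (hb : w b = 0)
    (hne : ∃ z ∈ Icc a b, w z ≠ 0) : ∃ z ∈ Icc a b, (k z).re ≤ 0 := by
  obtain ⟨z₀, hz₀, hwz₀, hmax⟩ := exists_mem_Ioo_isLocalMax_norm
    (fun z hz => (hw z hz).continuousAt.continuousWithinAt) ha hb hne
  have hnhds : Icc a b ∈ 𝓝 z₀ := Icc_mem_nhds hz₀.1 hz₀.2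
  have hinner := hmax.real_inner_second_deriv_nonpos (eventually_of_mem hnhds hw)
    (hw' z₀ (Ioo_subset_Icc_self hz₀))
  have hkw : inner ℝ (w z₀) (w'' z₀) = (k z₀).re * Complex.normSq (w z₀) := by
    rw [Complex.inner, heq z₀ (Ioo_subset_Icc_self hz₀), mul_assoc, Complex.mul_conj,
      Complex.re_mul_ofReal]
  rw [hkw] at hinner
  exact ⟨z₀, Ioo_subset_Icc_self hz₀,
    nonpos_of_mul_nonpos_left hinner (Complex.normSq_pos.2 hwz₀)⟩

theorem Complex.norm_ofReal_div_ofReal_sub_le (u v : ℝ) {c : ℂ} (hc : 0 < c.im) :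
    ‖(u : ℂ) / ((v : ℂ) - c)‖ ≤ |u| / c.im := by
  have him : c.im ≤ ‖(v : ℂ) - c‖ :=
    (le_abs_self _).trans (by simpa using Complex.abs_im_le_norm ((v : ℂ) - c))
  rw [norm_div, Complex.norm_real, Real.norm_eq_abs]
  exact div_le_div_of_nonneg_left (abs_nonneg u) hc him

theorem rayleigh_growth_rate_bound_general
    (z₁ z₂ : ℝ)
    (U U'' : ℝ → ℝ)
    (α : ℝ) (hα : 0 < α)
    (c : ℂ) (hci : 0 < c.im)
    (w w' w'' : ℝ → ℂ)
    (hw : ∀ z ∈ Icc z₁ z₂, HasDerivAt w (w' z) z)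
    (hw' : ∀ z ∈ Icc z₁ z₂, HasDerivAt w' (w'' z) z)
    (hw0 : ∃ z ∈ Icc z₁ z₂, w z ≠ 0)
    (hbc₁ : w z₁ = 0) (hbc₂ : w z₂ = 0)
    (heq : ∀ z ∈ Icc z₁ z₂,
      w'' z - (α : ℂ) ^ 2 * w z - ((U'' z : ℂ) / ((U z : ℂ) - c)) * w z = 0)
    (M2 : ℝ)
    (hM2 : IsGreatest ((fun z => (U'' z) ^ 2) '' Icc z₁ z₂) M2) :
    α ^ 4 * c.im ^ 2 ≤ M2 ∧ α * c.im ≤ Real.sqrt M2 / α := by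
  obtain ⟨z₀, hz₀, hre⟩ := exists_re_nonpos_of_hasDerivAt_eq_mul
    (k := fun z => (α : ℂ) ^ 2 + (U'' z : ℂ) / ((U z : ℂ) - c)) hw hw'
    (fun z hz => by linear_combination heq z hz) hbc₁ hbc₂ hw0
  have hU''M2 : U'' z₀ ^ 2 ≤ M2 := hM2.2 ⟨z₀, hz₀, rfl⟩
  have hkey : α ^ 2 * c.im ≤ |U'' z₀| := by
    rw [← le_div_iff₀ hci]
    have hsq : ((α : ℂ) ^ 2).re = α ^ 2 := by norm_cast
    rw [Complex.add_re, hsq] at hre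
    calc α ^ 2 ≤ -((U'' z₀ : ℂ) / ((U z₀ : ℂ) - c)).re := by linarith
      _ ≤ ‖(U'' z₀ : ℂ) / ((U z₀ : ℂ) - c)‖ := (neg_le_abs _).trans (Complex.abs_re_le_norm _)
      _ ≤ |U'' z₀| / c.im := Complex.norm_ofReal_div_ofReal_sub_le _ _ hci
  constructor
  · calc α ^ 4 * c.im ^ 2 = (α ^ 2 * c.im) ^ 2 := by ring
      _ ≤ |U'' z₀| ^ 2 := pow_le_pow_left₀ (by positivity) hkey 2
      _ = U'' z₀ ^ 2 := sq_abs _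
      _ ≤ M2 := hU''M2
  · rw [le_div_iff₀ hα]
    calc α * c.im * α = α ^ 2 * c.im := by ring
      _ ≤ |U'' z₀| := hkey
      _ = Real.sqrt (U'' z₀ ^ 2) := (Real.sqrt_sq_eq_abs _).symm
      _ ≤ Real.sqrt M2 := Real.sqrt_le_sqrt hU''M2

/-- Homogeneous special case `β = 0` (result of Banerjee et al.): for an unstable mode
of the Rayleigh eigenvalue problem, `α⁴c_i² ≤ M²`, and in particular `αc_i ≤ M/α`
where `M = √(M²)`, so that the growth rate `αc_i` tends to `0` as `α → ∞`. -/
theorem rayleigh_growth_rate_bound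
    (z₁ z₂ : ℝ) (hz : z₁ < z₂)
    (U U' U'' : ℝ → ℝ)
    (hU : ∀ z ∈ Icc z₁ z₂, HasDerivAt U (U' z) z)
    (hU' : ∀ z ∈ Icc z₁ z₂, HasDerivAt U' (U'' z) z)
    (hU'' : ContinuousOn U'' (Icc z₁ z₂))
    (α : ℝ) (hα : 0 < α)
    (c : ℂ) (hci : 0 < c.im)
    (w w' w'' : ℝ → ℂ)
    (hw : ∀ z ∈ Icc z₁ z₂, HasDerivAt w (w' z) z)
    (hw' : ∀ z ∈ Icc z₁ z₂, HasDerivAt w' (w'' z) z)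
    (hw'' : ContinuousOn w'' (Icc z₁ z₂))
    (hw0 : ∃ z ∈ Icc z₁ z₂, w z ≠ 0)
    (hbc₁ : w z₁ = 0) (hbc₂ : w z₂ = 0)
    (heq : ∀ z ∈ Icc z₁ z₂,
      w'' z - (α : ℂ) ^ 2 * w z - ((U'' z : ℂ) / ((U z : ℂ) - c)) * w z = 0)
    (M2 : ℝ)
    (hM2 : IsGreatest ((fun z => (U'' z) ^ 2) '' Icc z₁ z₂) M2) :
    α ^ 4 * c.im ^ 2 ≤ M2 ∧ α * c.im ≤ Real.sqrt M2 / α :=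
  rayleigh_growth_rate_bound_general z₁ z₂ U U'' α hα c hci w w' w'' hw hw' hw0 hbc₁ hbc₂ heq M2 hM2
end
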